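/- Let R be a tournament on branches of T_max induced level-wise from tournaments R_t on immediate successors of nodes t, i.e., R(x,y) iff R_{x∩y}(x↾(|x∩y|+1), y↾(|x∩y|+1)). Let u₀, u₂, u₄ be distinct branches with R(u₀,u₂), R(u₂,u₄) and R(u₄,u₀). Then u₀∩u₂ = u₂∩u₄ = u₀∩u₄, i.e., the three branches have a common meet. -/

import Mathlib

/-!
A branch `x` sees every branch `z` that splits off from a branch `y` strictly above `x ∩ y`
exactly as it sees `y`: `x ∩ z = x ∩ y` and `z` passes through the same successor of `x ∩ y`
as `y`, so `R x y ↔ R x z`. Since `R` is asymmetric, `R x y` and `R z x` therefore force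
`|y ∩ z| ≤ |x ∩ y|`. Going around the cycle `u₀ → u₂ → u₄ → u₀` gives the three inequalities
`|u₂ ∩ u₄| ≤ |u₀ ∩ u₂| ≤ |u₄ ∩ u₀| ≤ |u₂ ∩ u₄|`.
-/

/-- The position of first difference of two infinite sequences:
the length of their longest common initial segment. -/
noncomputable def meetLen (x y : ℕ → ℕ) : ℕ := sInf {n | x n ≠ y n}

/-- The initial segment of `x` of length `n`, as a finite sequence (list). -/
def restrict (x : ℕ → ℕ) (n : ℕ) : List ℕ := (List.range n).map x

/-- The meet `x ∩ y`: the longest common initial segment of distinct sequences. -/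
noncomputable def meet (x y : ℕ → ℕ) : List ℕ := restrict x (meetLen x y)

section Meet

variable {x y z : ℕ → ℕ} {n : ℕ}

lemma meetLen_comm (x y : ℕ → ℕ) : meetLen x y = meetLen y x := by
  simp only [meetLen, ne_comm]

lemma apply_meetLen_ne (h : x ≠ y) : x (meetLen x y) ≠ y (meetLen x y) :=
  Nat.sInf_mem (Function.ne_iff.mp h)

lemma apply_eq_of_lt_meetLen (h : n < meetLen x y) : x n = y n :=
  not_not.mp (Nat.notMem_of_lt_sInf h)

lemma restrict_succ (x : ℕ → ℕ) (n : ℕ) : restrict x (n + 1) = restrict x n ++ [x n] := by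
  simp [restrict, List.range_succ]

lemma restrict_eq_of_le_meetLen (h : n ≤ meetLen x y) : restrict x n = restrict y n :=
  List.map_congr_left fun _ hk ↦ apply_eq_of_lt_meetLen ((List.mem_range.mp hk).trans_le h)

lemma meet_comm (x y : ℕ → ℕ) : meet x y = meet y x := by
  rw [meet, meet, meetLen_comm y x, restrict_eq_of_le_meetLen le_rfl]

lemma meetLen_eq_of_meetLen_lt (hxy : x ≠ y) (h : meetLen x y < meetLen y z) :
    meetLen x z = meetLen x y := by
  have hz : z (meetLen x y) = y (meetLen x y) := (apply_eq_of_lt_meetLen h).symm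
  have hxz : x (meetLen x y) ≠ z (meetLen x y) := hz ▸ apply_meetLen_ne hxy
  refine le_antisymm (Nat.sInf_le hxz) (not_lt.mp fun hlt ↦ ?_)
  refine apply_meetLen_ne (x := x) (y := z) (fun e ↦ hxz (by rw [e])) ?_
  rw [apply_eq_of_lt_meetLen hlt, apply_eq_of_lt_meetLen (hlt.trans h)]

end Meet

def IsBranch (T : Set (List ℕ)) (x : ℕ → ℕ) : Prop := ∀ n, restrict x n ∈ T

def IsSuccessorTournament (T : Set (List ℕ)) (Rt : List ℕ → List ℕ → List ℕ → Prop) : Prop :=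
  ∀ t ∈ T, ∀ a b : ℕ, t ++ [a] ∈ T → t ++ [b] ∈ T → a ≠ b →
    Xor (Rt t (t ++ [a]) (t ++ [b])) (Rt t (t ++ [b]) (t ++ [a]))

section InducedTournament

variable {T : Set (List ℕ)} {Rt : List ℕ → List ℕ → List ℕ → Prop}
  {R : (ℕ → ℕ) → (ℕ → ℕ) → Prop}
  (hR : ∀ a b : ℕ → ℕ, a ≠ b →
    (R a b ↔ Rt (meet a b) (restrict a (meetLen a b + 1)) (restrict b (meetLen a b + 1))))
  {x y z : ℕ → ℕ}
include hR

lemma rel_iff_at_meet (hxy : x ≠ y) :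
    R x y ↔ Rt (meet x y) (meet x y ++ [x (meetLen x y)]) (meet x y ++ [y (meetLen x y)]) := by
  rw [hR x y hxy, restrict_succ, restrict_succ, meet,
    restrict_eq_of_le_meetLen (y := y) le_rfl]

lemma rel_asymm (htour : IsSuccessorTournament T Rt) (hx : IsBranch T x) (hy : IsBranch T y)
    (hxy : x ≠ y) (rxy : R x y) : ¬ R y x := by
  intro ryx
  rw [rel_iff_at_meet hR hxy] at rxy
  rw [rel_iff_at_meet hR hxy.symm, meet_comm y x, meetLen_comm y x] at ryx
  have hxa : meet x y ++ [x (meetLen x y)] ∈ T := by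
    rw [meet, ← restrict_succ]; exact hx _
  have hyb : meet x y ++ [y (meetLen x y)] ∈ T := by
    rw [meet, restrict_eq_of_le_meetLen le_rfl, ← restrict_succ]; exact hy _
  rcases htour _ (hx _) _ _ hxa hyb (apply_meetLen_ne hxy) with ⟨-, h⟩ | ⟨-, h⟩
  · exact h ryx
  · exact h rxy

lemma rel_iff_rel_of_meetLen_lt (hxy : x ≠ y) (h : meetLen x y < meetLen y z) :
    R x y ↔ R x z := by
  have hlen := meetLen_eq_of_meetLen_lt hxy h
  have hxz : x ≠ z := by
    rintro rfl
    exact h.ne (meetLen_comm x y)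
  rw [hR x y hxy, hR x z hxz, meet, meet, hlen,
    restrict_eq_of_le_meetLen (x := y) (y := z) (by omega)]

lemma meetLen_le_of_rel_of_rel (htour : IsSuccessorTournament T Rt) (hx : IsBranch T x)
    (hz : IsBranch T z) (hxy : x ≠ y) (hxz : x ≠ z) (rxy : R x y) (rzx : R z x) :
    meetLen y z ≤ meetLen x y :=
  not_lt.mp fun h ↦
    rel_asymm hR htour hx hz hxz ((rel_iff_rel_of_meetLen_lt hR hxy h).mp rxy) rzx

end InducedTournament

theorem tournament_cycle_common_meet_general (T : Set (List ℕ))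
    (Rt : List ℕ → List ℕ → List ℕ → Prop)
    (htour : ∀ t ∈ T, ∀ a b : ℕ, t ++ [a] ∈ T → t ++ [b] ∈ T → a ≠ b →
      Xor' (Rt t (t ++ [a]) (t ++ [b])) (Rt t (t ++ [b]) (t ++ [a])))
    (R : (ℕ → ℕ) → (ℕ → ℕ) → Prop)
    (hR : ∀ a b : ℕ → ℕ, a ≠ b →
      (R a b ↔ Rt (meet a b) (restrict a (meetLen a b + 1)) (restrict b (meetLen a b + 1))))
    (u₀ u₂ u₄ : ℕ → ℕ)
    (h0 : ∀ n : ℕ, restrict u₀ n ∈ T) (h2 : ∀ n : ℕ, restrict u₂ n ∈ T)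
    (h4 : ∀ n : ℕ, restrict u₄ n ∈ T)
    (h02 : u₀ ≠ u₂) (h04 : u₀ ≠ u₄) (h24 : u₂ ≠ u₄)
    (hR02 : R u₀ u₂) (hR24 : R u₂ u₄) (hR40 : R u₄ u₀) :
    meet u₀ u₂ = meet u₂ u₄ ∧ meet u₀ u₂ = meet u₀ u₄ := by
  have le₀ := meetLen_le_of_rel_of_rel hR htour h0 h4 h02 h04 hR02 hR40
  have le₂ := meetLen_le_of_rel_of_rel hR htour h2 h0 h24 h02.symm hR24 hR02
  have le₄ := meetLen_le_of_rel_of_rel hR htour h4 h2 h04.symm h24.symm hR40 hR24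
  rw [meetLen_comm u₄ u₀] at le₂ le₄
  have e₂₄ : meetLen u₀ u₂ = meetLen u₂ u₄ := by omega
  have e₀₄ : meetLen u₀ u₂ = meetLen u₀ u₄ := by omega
  refine ⟨?_, by rw [meet, meet, e₀₄]⟩
  rw [meet, meet, ← e₂₄, restrict_eq_of_le_meetLen le_rfl]

/-- For a tournament on branches induced level-wise, a cyclically oriented
triple `R(u₀,u₂), R(u₂,u₄), R(u₄,u₀)` has a common meet. -/
theorem tournament_cycle_common_meet (T : Set (List ℕ))
    (hdc : ∀ s t : List ℕ, s <+: t → t ∈ T → s ∈ T)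
    (hfb : ∀ t ∈ T, {a : ℕ | t ++ [a] ∈ T}.Finite)
    (hnt : ∀ t ∈ T, ∃ a : ℕ, t ++ [a] ∈ T)
    (Rt : List ℕ → List ℕ → List ℕ → Prop)
    (htour : ∀ t ∈ T, ∀ a b : ℕ, t ++ [a] ∈ T → t ++ [b] ∈ T → a ≠ b →
      Xor' (Rt t (t ++ [a]) (t ++ [b])) (Rt t (t ++ [b]) (t ++ [a])))
    (R : (ℕ → ℕ) → (ℕ → ℕ) → Prop)
    (hR : ∀ a b : ℕ → ℕ, a ≠ b →
      (R a b ↔ Rt (meet a b) (restrict a (meetLen a b + 1)) (restrict b (meetLen a b + 1))))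
    (u₀ u₂ u₄ : ℕ → ℕ)
    (h0 : ∀ n : ℕ, restrict u₀ n ∈ T) (h2 : ∀ n : ℕ, restrict u₂ n ∈ T)
    (h4 : ∀ n : ℕ, restrict u₄ n ∈ T)
    (h02 : u₀ ≠ u₂) (h04 : u₀ ≠ u₄) (h24 : u₂ ≠ u₄)
    (hR02 : R u₀ u₂) (hR24 : R u₂ u₄) (hR40 : R u₄ u₀) :
    meet u₀ u₂ = meet u₂ u₄ ∧ meet u₀ u₂ = meet u₀ u₄ :=
  tournament_cycle_common_meet_general T Rt htour R hR u₀ u₂ u₄ h0 h2 h4 h02 h04 h24 hR02 hR24 hR40
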